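/- arXiv:2508.17355 — 3 statements merged into one kernel-verified Lean document; each statement's English description precedes it below -/
import Mathlib

section
/- Let $I \subset \mathbb{R}$ be an interval of positive finite length $|I|$, and for $\alpha \in \mathbb{Z}$ let $I(\alpha) = [|I|\alpha - |I|/2, |I|\alpha + |I|/2)$. If $f : \mathbb{R} \to \mathbb{C}$ is continuously differentiable with $f, f' \in L^2(\mathbb{R})$, then $\sum_{\alpha \in \mathbb{Z}} \sup_{x \in I(\alpha)} |f(x)|^2 \le 2\left(\frac{1}{|I|}\int_{\mathbb{R}}|f|^2 + |I|\int_{\mathbb{R}}|f'|^2\right)$. -/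
open MeasureTheory

/-! On a cell `I` of length `L`, the derivative of `‖f‖²` is `2⟪f, f'⟫`, so `‖f‖²` oscillates on
`I` by at most `∫_I 2‖f‖‖f'‖ ≤ L⁻¹ ∫_I ‖f‖² + L ∫_I ‖f'‖²` (AM-GM). A function exceeds its mean
`L⁻¹ ∫_I ‖f‖²` by at most its oscillation, hence `sup_I ‖f‖² ≤ 2 L⁻¹ ∫_I ‖f‖² + L ∫_I ‖f'‖²`, and
summing over the cells `I(α)`, which tile `ℝ`, gives the bound. -/

open Set Function
open scoped Interval

def cell (L : ℝ) (α : ℤ) : Set ℝ := Ico (L * α - L / 2) (L * α + L / 2)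

lemma cell_eq_Ico_add_zsmul (L : ℝ) (α : ℤ) :
    cell L α = Ico (-(L / 2) + α • L) (-(L / 2) + (α + 1) • L) := by
  simp only [cell, zsmul_eq_mul, Int.cast_add, Int.cast_one]
  congr 1 <;> ring

lemma pairwise_disjoint_cell (L : ℝ) : Pairwise (Disjoint on cell L) := by
  rw [show cell L = _ from funext (cell_eq_Ico_add_zsmul L)]
  exact pairwise_disjoint_Ico_add_zsmul (-(L / 2)) L

lemma iUnion_cell {L : ℝ} (hL : 0 < L) : ⋃ α, cell L α = univ := by
  simpa only [cell_eq_Ico_add_zsmul] using iUnion_Ico_add_zsmul hL (-(L / 2))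

lemma hasSum_setIntegral_cell {E : Type*} [NormedAddCommGroup E] [NormedSpace ℝ E] {L : ℝ}
    (hL : 0 < L) {g : ℝ → E} (hg : Integrable g) :
    HasSum (fun α => ∫ t in cell L α, g t) (∫ t, g t) := by
  simpa only [iUnion_cell hL, setIntegral_univ] using
    hasSum_integral_iUnion (s := cell L) (fun _ => measurableSet_Ico) (pairwise_disjoint_cell L)
      (by rw [iUnion_cell hL, integrableOn_univ]; exact hg)

lemma le_inv_measureReal_mul_setIntegral_add {X : Type*} [MeasurableSpace X] {μ : Measure X}
    {s : Set X} {g : X → ℝ} {x : X} {D : ℝ} (hs : MeasurableSet s) (hμs : μ s ≠ ⊤)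
    (hμs₀ : 0 < μ.real s) (hg : IntegrableOn g s μ) (hosc : ∀ y ∈ s, g x ≤ g y + D) :
    g x ≤ (μ.real s)⁻¹ * ∫ y in s, g y ∂μ + D := by
  have hmass : (g x - D) * μ.real s ≤ ∫ y in s, g y ∂μ :=
    setIntegral_ge_of_const_le_real hs hμs (fun y hy => by linarith [hosc y hy]) hg
  have hmean : g x - D ≤ (μ.real s)⁻¹ * ∫ y in s, g y ∂μ := by
    rwa [inv_mul_eq_div, le_div_iff₀ hμs₀]
  linarith

variable {F : Type*} [NormedAddCommGroup F] [InnerProductSpace ℝ F]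

lemma sq_norm_sub_sq_norm_le_setIntegral_uIoc {f : ℝ → F} (hf : ContDiff ℝ 1 f) (x y : ℝ) :
    ‖f x‖ ^ 2 - ‖f y‖ ^ 2 ≤ ∫ t in Ι y x, 2 * (‖f t‖ * ‖deriv f t‖) := by
  have hfc := hf.continuous
  have hf'c : Continuous (deriv f) := hf.continuous_deriv le_rfl
  have hc : Continuous fun t => 2 * inner ℝ (f t) (deriv f t) := by fun_prop
  rw [← intervalIntegral.integral_eq_sub_of_hasDerivAt
    (fun t _ => ((hf.differentiable one_ne_zero t).hasDerivAt).norm_sq) (hc.intervalIntegrable y x)]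
  calc ∫ t in y..x, 2 * inner ℝ (f t) (deriv f t)
      ≤ ‖∫ t in Ι y x, 2 * inner ℝ (f t) (deriv f t)‖ :=
        (Real.le_norm_self _).trans (intervalIntegral.norm_integral_eq_norm_integral_uIoc _).le
    _ ≤ ∫ t in Ι y x, 2 * (‖f t‖ * ‖deriv f t‖) := by
      refine norm_integral_le_of_norm_le (Continuous.integrableOn_uIoc (by fun_prop))
        (ae_of_all _ fun t => ?_)
      rw [norm_mul, Real.norm_two, Real.norm_eq_abs]
      exact mul_le_mul_of_nonneg_left (abs_real_inner_le_norm _ _) zero_le_two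

lemma iSup_sq_norm_Ico_le_mean_add {f : ℝ → F} (hf : ContDiff ℝ 1 f) {a b : ℝ} (hab : a < b) :
    ⨆ x ∈ Ico a b, ‖f x‖ ^ 2 ≤
      (b - a)⁻¹ * (∫ t in Ico a b, ‖f t‖ ^ 2) + ∫ t in Ico a b, 2 * (‖f t‖ * ‖deriv f t‖) := by
  have hfc := hf.continuous
  have hf'c : Continuous (deriv f) := hf.continuous_deriv le_rfl
  have hint {g : ℝ → ℝ} (hg : Continuous g) : IntegrableOn g (Ico a b) :=
    hg.integrableOn_Icc.mono_set Ico_subset_Icc_self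
  have hvol : volume.real (Ico a b) = b - a := by simp [hab.le]
  have hnn : 0 ≤ (b - a)⁻¹ * (∫ t in Ico a b, ‖f t‖ ^ 2) +
      ∫ t in Ico a b, 2 * (‖f t‖ * ‖deriv f t‖) :=
    add_nonneg (mul_nonneg (inv_nonneg.2 (sub_nonneg.2 hab.le))
      (setIntegral_nonneg measurableSet_Ico fun _ _ => by positivity))
      (setIntegral_nonneg measurableSet_Ico fun _ _ => by positivity)
  refine Real.iSup_le (fun x => Real.iSup_le (fun hx => ?_) hnn) hnn
  rw [← hvol]
  refine le_inv_measureReal_mul_setIntegral_add measurableSet_Ico measure_Ico_lt_top.ne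
    (hvol ▸ sub_pos.2 hab) (hint (g := fun t => ‖f t‖ ^ 2) (by fun_prop)) fun y hy => ?_
  have hsub : Ι y x ⊆ Ico a b := fun t ht =>
    ⟨(le_min hy.1 hx.1).trans ht.1.le, ht.2.trans_lt (max_lt hy.2 hx.2)⟩
  linarith [sq_norm_sub_sq_norm_le_setIntegral_uIoc hf x y,
    setIntegral_mono_set (hint (g := fun t => 2 * (‖f t‖ * ‖deriv f t‖)) (by fun_prop))
      (ae_of_all _ fun t => by positivity) hsub.eventuallyLE]

lemma two_mul_le_inv_mul_sq_add_mul_sq {L : ℝ} (hL : 0 < L) (a b : ℝ) :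
    2 * (a * b) ≤ L⁻¹ * a ^ 2 + L * b ^ 2 := by
  have hsq : 0 ≤ L⁻¹ * (a - L * b) ^ 2 := by positivity
  have hexp : L⁻¹ * (a - L * b) ^ 2 = L⁻¹ * a ^ 2 + L * b ^ 2 - 2 * (a * b) := by
    field_simp; ring
  linarith

lemma iSup_sq_norm_Ico_le {f : ℝ → F} (hf : ContDiff ℝ 1 f) {a b : ℝ} (hab : a < b) :
    ⨆ x ∈ Ico a b, ‖f x‖ ^ 2 ≤
      2 * (b - a)⁻¹ * (∫ t in Ico a b, ‖f t‖ ^ 2) + (b - a) * ∫ t in Ico a b, ‖deriv f t‖ ^ 2 := by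
  have hfc := hf.continuous
  have hf'c : Continuous (deriv f) := hf.continuous_deriv le_rfl
  have hint {g : ℝ → ℝ} (hg : Continuous g) : IntegrableOn g (Ico a b) :=
    hg.integrableOn_Icc.mono_set Ico_subset_Icc_self
  calc ⨆ x ∈ Ico a b, ‖f x‖ ^ 2
      ≤ (b - a)⁻¹ * (∫ t in Ico a b, ‖f t‖ ^ 2) + ∫ t in Ico a b, 2 * (‖f t‖ * ‖deriv f t‖) :=
        iSup_sq_norm_Ico_le_mean_add hf hab
    _ ≤ (b - a)⁻¹ * (∫ t in Ico a b, ‖f t‖ ^ 2) +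
          ∫ t in Ico a b, ((b - a)⁻¹ * ‖f t‖ ^ 2 + (b - a) * ‖deriv f t‖ ^ 2) := by
        grw [setIntegral_mono_on (hint (by fun_prop))
          (hint (g := fun t => (b - a)⁻¹ * ‖f t‖ ^ 2 + (b - a) * ‖deriv f t‖ ^ 2) (by fun_prop))
          measurableSet_Ico
          fun t _ => two_mul_le_inv_mul_sq_add_mul_sq (sub_pos.2 hab) _ _]
    _ = _ := by
        rw [integral_add ((hint (g := fun t => ‖f t‖ ^ 2) (by fun_prop)).const_mul _)
          ((hint (g := fun t => ‖deriv f t‖ ^ 2) (by fun_prop)).const_mul _),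
          integral_const_mul, integral_const_mul]
        ring

/-- Sledd–Stegenga 1D summed lemma: for intervals `I(α) = [Lα - L/2, Lα + L/2)`, `α ∈ ℤ`,
of common length `L > 0`, and `f : ℝ → ℂ` continuously differentiable with
`f, f' ∈ L²(ℝ)`,
`∑_{α ∈ ℤ} sup_{x ∈ I(α)} |f x|² ≤ 2 ((1/L) ∫_ℝ |f|² + L ∫_ℝ |f'|²)`. -/
theorem stmt_1 (L : ℝ) (hL : 0 < L) (f : ℝ → ℂ) (hf : ContDiff ℝ 1 f)
    (hf2 : MemLp f 2 volume) (hf'2 : MemLp (deriv f) 2 volume) :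
    ∑' α : ℤ, ⨆ x ∈ Set.Ico (L * α - L / 2) (L * α + L / 2), ‖f x‖ ^ 2 ≤
      2 * (L⁻¹ * (∫ t, ‖f t‖ ^ 2) + L * ∫ t, ‖deriv f t‖ ^ 2) := by
  have hcell (α : ℤ) : ⨆ x ∈ cell L α, ‖f x‖ ^ 2 ≤
      2 * L⁻¹ * (∫ t in cell L α, ‖f t‖ ^ 2) + L * ∫ t in cell L α, ‖deriv f t‖ ^ 2 := by
    have hlen : L * α + L / 2 - (L * α - L / 2) = L := by ring
    have := iSup_sq_norm_Ico_le hf (a := L * α - L / 2) (b := L * α + L / 2) (by linarith)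
    rwa [hlen] at this
  have hsum := ((hasSum_setIntegral_cell hL (hf2.integrable_norm_pow two_ne_zero)).mul_left
    (2 * L⁻¹)).add ((hasSum_setIntegral_cell hL (hf'2.integrable_norm_pow two_ne_zero)).mul_left L)
  have hnn (α : ℤ) : 0 ≤ ⨆ x ∈ cell L α, ‖f x‖ ^ 2 :=
    Real.iSup_nonneg fun _ => Real.iSup_nonneg fun _ => by positivity
  have hle := hasSum_le hcell (Summable.of_nonneg_of_le hnn hcell hsum.summable).hasSum hsum
  have hr : 0 ≤ L * ∫ t, ‖deriv f t‖ ^ 2 :=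
    mul_nonneg hL.le (integral_nonneg fun _ => by positivity)
  exact hle.trans (by linarith)
end

section
/- Let $A \in GL(d,\mathbb{R})$ be a matrix all of whose eigenvalues have modulus strictly greater than $1$. Then there exists an ellipsoid $\Delta = Q^{-1}(B(0,1))$ for some $Q \in GL(d,\mathbb{R})$ such that $\Delta \subset A(\Delta)$. -/
/-!
Since every eigenvalue of `A` lies outside the closed unit disc, the spectral radius of `A⁻¹`
is `< 1`, so by Gelfand's formula `‖A⁻¹ ^ N‖ < 1` for some `N > 0` (Frobenius norm). The
quadratic form `q x = ∑_{k<N} |A⁻¹ ^ k x|²` is then positive definite and satisfies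
`q (A⁻¹ x) = q x - |x|² + |A⁻¹ ^ N x|² ≤ q x`. Writing `q x = |Q x|²`, the ellipsoid
`Δ = {q < 1} = Q⁻¹(B(0,1))` is mapped into itself by `A⁻¹`, i.e. `Δ ⊆ A(Δ)`.
-/

def eucBall (d : ℕ) : Set (Fin d → ℝ) := {x | ∑ i, x i ^ 2 < 1}

open Filter Finset Matrix

section BanachAlgebra

variable {A : Type*} [NormedRing A] [NormedAlgebra ℂ A] [CompleteSpace A]

theorem eventually_nnnorm_pow_lt_one_of_spectralRadius_lt_one {a : A}
    (h : spectralRadius ℂ a < 1) : ∀ᶠ n in atTop, ‖a ^ n‖₊ < 1 := by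
  filter_upwards [(spectrum.pow_nnnorm_pow_one_div_tendsto_nhds_spectralRadius a).eventually_lt_const
    h, eventually_gt_atTop 0] with n hroot hn
  by_contra! hle
  exact (ENNReal.one_le_rpow (by exact_mod_cast hle) (by positivity)).not_gt hroot

theorem spectralRadius_inv_lt_one {u : Aˣ} (h : ∀ z ∈ spectrum ℂ (u : A), 1 < ‖z‖) :
    spectralRadius ℂ (↑u⁻¹ : A) < 1 := by
  cases subsingleton_or_nontrivial A
  · simp [spectrum.SpectralRadius.of_subsingleton]
  · refine spectrum.spectralRadius_lt_of_forall_lt _ fun z hz => ?_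
    rw [← spectrum.map_inv] at hz
    have hz' := h _ hz
    rw [norm_inv, one_lt_inv_iff₀] at hz'
    exact_mod_cast hz'.2

end BanachAlgebra

theorem EuclideanSpace.norm_toLp_sq {n : Type*} [Fintype n] (v : n → ℝ) :
    ‖WithLp.toLp 2 v‖ ^ 2 = v ⬝ᵥ v := by
  rw [EuclideanSpace.norm_sq_eq]
  simp [dotProduct, sq]

namespace Matrix

variable {n : Type*} [Fintype n]

theorem dotProduct_transpose_mul_self_mulVec (Q : Matrix n n ℝ) (x : n → ℝ) :
    x ⬝ᵥ ((Qᵀ * Q) *ᵥ x) = (Q *ᵥ x) ⬝ᵥ (Q *ᵥ x) := by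
  rw [← mulVec_mulVec, dotProduct_mulVec, vecMul_transpose]

section Frobenius

open scoped Matrix.Norms.Frobenius

theorem mulVec_dotProduct_mulVec_self_le (M : Matrix n n ℝ) (x : n → ℝ) :
    (M *ᵥ x) ⬝ᵥ (M *ᵥ x) ≤ ‖M‖ ^ 2 * (x ⬝ᵥ x) := by
  have h : ‖WithLp.toLp 2 (M *ᵥ x)‖ ≤ ‖M‖ * ‖WithLp.toLp 2 x‖ := by
    simpa only [← frobenius_norm_replicateCol (ι := Unit), replicateCol_mulVec]
      using frobenius_norm_mul M (replicateCol Unit x)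
  rw [← EuclideanSpace.norm_toLp_sq, ← EuclideanSpace.norm_toLp_sq, ← mul_pow]
  gcongr

variable [DecidableEq n]

theorem exists_pow_nonsing_inv_frobenius_nnnorm_lt_one (A : Matrix n n ℝ) (hA : IsUnit A.det)
    (hspec : ∀ z ∈ spectrum ℂ (A.map Complex.ofReal), 1 < ‖z‖) :
    ∃ N, 0 < N ∧ ‖A⁻¹ ^ N‖₊ < 1 := by
  let f := Complex.ofRealHom.mapMatrix (m := n)
  let u : (Matrix n n ℂ)ˣ :=
    ⟨f A, f A⁻¹, by rw [← map_mul, mul_nonsing_inv A hA, map_one],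
      by rw [← map_mul, nonsing_inv_mul A hA, map_one]⟩
  have : CompleteSpace (Matrix n n ℂ) := FiniteDimensional.complete ℂ _
  obtain ⟨N, hN, hpos⟩ := ((eventually_nnnorm_pow_lt_one_of_spectralRadius_lt_one
    (spectralRadius_inv_lt_one (u := u) hspec)).and (eventually_gt_atTop 0)).exists
  refine ⟨N, hpos, ?_⟩
  rwa [Units.inv_mk, ← map_pow, RingHom.mapMatrix_apply,
    frobenius_nnnorm_map_eq _ Complex.ofRealHom Complex.nnnorm_real] at hN

theorem exists_pow_nonsing_inv_mulVec_dotProduct_le (A : Matrix n n ℝ) (hA : IsUnit A.det)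
    (hspec : ∀ z ∈ spectrum ℂ (A.map Complex.ofReal), 1 < ‖z‖) :
    ∃ N, 0 < N ∧ ∀ x, (A⁻¹ ^ N *ᵥ x) ⬝ᵥ (A⁻¹ ^ N *ᵥ x) ≤ x ⬝ᵥ x := by
  obtain ⟨N, hN, hnorm⟩ := exists_pow_nonsing_inv_frobenius_nnnorm_lt_one A hA hspec
  refine ⟨N, hN, fun x => (mulVec_dotProduct_mulVec_self_le _ x).trans ?_⟩
  have hnorm' : ‖A⁻¹ ^ N‖ ^ 2 ≤ 1 := pow_le_one₀ (norm_nonneg _) (mod_cast hnorm.le)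
  simpa using mul_le_of_le_one_left (by simpa using dotProduct_star_self_nonneg x) hnorm'

end Frobenius

variable [DecidableEq n]

def lyapunovMatrix (B : Matrix n n ℝ) (N : ℕ) : Matrix n n ℝ :=
  ∑ k ∈ range N, (B ^ k)ᵀ * B ^ k

variable {B : Matrix n n ℝ} {N : ℕ}

theorem dotProduct_lyapunovMatrix_mulVec (x : n → ℝ) :
    x ⬝ᵥ (lyapunovMatrix B N *ᵥ x) = ∑ k ∈ range N, (B ^ k *ᵥ x) ⬝ᵥ (B ^ k *ᵥ x) := by
  simp only [lyapunovMatrix, sum_mulVec, dotProduct_sum, dotProduct_transpose_mul_self_mulVec]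

theorem posDef_lyapunovMatrix (hN : 0 < N) : (lyapunovMatrix B N).PosDef := by
  refine posDef_iff_dotProduct_mulVec.mpr ⟨?_, fun x hx => ?_⟩
  · simp only [IsHermitian, conjTranspose_eq_transpose_of_trivial, lyapunovMatrix, transpose_sum,
      transpose_mul, transpose_transpose]
  · rw [star_trivial, dotProduct_lyapunovMatrix_mulVec]
    calc 0 < (B ^ 0 *ᵥ x) ⬝ᵥ (B ^ 0 *ᵥ x) := by simpa using dotProduct_self_star_pos_iff.mpr hx
      _ ≤ _ := single_le_sum (fun k (_ : k ∈ range N) => by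
          simpa using dotProduct_star_self_nonneg (B ^ k *ᵥ x)) (mem_range.mpr hN)

/-- The sum telescopes: `q (B x) = q x - |x|² + |B ^ N x|²`. -/
theorem lyapunovMatrix_mulVec_le (hB : ∀ x, (B ^ N *ᵥ x) ⬝ᵥ (B ^ N *ᵥ x) ≤ x ⬝ᵥ x)
    (x : n → ℝ) :
    (B *ᵥ x) ⬝ᵥ (lyapunovMatrix B N *ᵥ (B *ᵥ x)) ≤ x ⬝ᵥ (lyapunovMatrix B N *ᵥ x) := by
  set q : ℕ → ℝ := fun k => (B ^ k *ᵥ x) ⬝ᵥ (B ^ k *ᵥ x)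
  have hshift : ∑ k ∈ range N, q (k + 1) + q 0 = ∑ k ∈ range N, q k + q N := by
    rw [← sum_range_succ', sum_range_succ]
  have hq : ∀ k, (B ^ k *ᵥ (B *ᵥ x)) ⬝ᵥ (B ^ k *ᵥ (B *ᵥ x)) = q (k + 1) := fun k => by
    simp only [q, mulVec_mulVec, ← pow_succ]
  rw [dotProduct_lyapunovMatrix_mulVec, dotProduct_lyapunovMatrix_mulVec]
  simp only [hq]
  have hN := hB x
  simp only [q, pow_zero, one_mulVec] at hshift
  linarith

open scoped MatrixOrder in
theorem PosDef.exists_isUnit_transpose_mul_self_eq {P : Matrix n n ℝ} (hP : P.PosDef) :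
    ∃ Q : Matrix n n ℝ, IsUnit Q ∧ P = Qᵀ * Q := by
  simpa [star_eq_conjTranspose] using
    CStarAlgebra.isStrictlyPositive_iff_eq_star_mul_self.mp hP.isStrictlyPositive

theorem image_nonsing_inv_mulVec {Q : Matrix n n ℝ} (hQ : IsUnit Q.det) (s : Set (n → ℝ)) :
    Q⁻¹.mulVec '' s = Q.mulVec ⁻¹' s := by
  refine congrFun (Set.image_eq_preimage_of_inverse (fun x => ?_) (fun x => ?_)) s
  · simp [mulVec_mulVec, mul_nonsing_inv _ hQ]
  · simp [mulVec_mulVec, nonsing_inv_mul _ hQ]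

end Matrix

theorem mem_eucBall_iff {d : ℕ} {x : Fin d → ℝ} : x ∈ eucBall d ↔ x ⬝ᵥ x < 1 := by
  simp [eucBall, dotProduct, sq]

/-- If all eigenvalues of `A ∈ GL(d, ℝ)` have modulus strictly greater than `1`, then there
is an ellipsoid `Δ = Q⁻¹(B(0,1))`, for some `Q ∈ GL(d, ℝ)`, with `Δ ⊂ A(Δ)`. -/
theorem stmt_5 (d : ℕ) (A : Matrix (Fin d) (Fin d) ℝ) (hA : IsUnit A.det)
    (hspec : ∀ z ∈ spectrum ℂ (A.map (Complex.ofReal)), 1 < ‖z‖) :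
    ∃ Q : Matrix (Fin d) (Fin d) ℝ, IsUnit Q.det ∧
      Q⁻¹.mulVec '' eucBall d ⊆ A.mulVec '' (Q⁻¹.mulVec '' eucBall d) := by
  obtain ⟨N, hN, hcontr⟩ := exists_pow_nonsing_inv_mulVec_dotProduct_le A hA hspec
  obtain ⟨Q, hQ, hPQ⟩ := (posDef_lyapunovMatrix (B := A⁻¹) hN).exists_isUnit_transpose_mul_self_eq
  have hQdet : IsUnit Q.det := (isUnit_iff_isUnit_det Q).mp hQ
  refine ⟨Q, hQdet, ?_⟩
  rw [image_nonsing_inv_mulVec hQdet]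
  intro y hy
  refine ⟨A⁻¹ *ᵥ y, ?_, by rw [mulVec_mulVec, mul_nonsing_inv A hA, one_mulVec]⟩
  rw [Set.mem_preimage, mem_eucBall_iff, ← dotProduct_transpose_mul_self_mulVec, ← hPQ] at hy ⊢
  exact (lyapunovMatrix_mulVec_le hcontr y).trans_lt hy
end

section
/- Let $A$ be a dilation matrix with nested ellipsoids $\Delta_k = A^k(\Delta)$, and define $\rho_A(x) = b^k$ for $x \in \Delta_{k+1}\setminus\Delta_k$ and $\rho_A(0) = 0$, where $b = |\det A|$. Then $\rho_A$ is a homogeneous quasi-norm associated with $A$: $\rho_A(x) = 0$ iff $x = 0$, $\rho_A(Ax) = b\,\rho_A(x)$ for all $x$, and there exists $c > 0$ with $\rho_A(x+y) \le c(\rho_A(x)+\rho_A(y))$ for all $x, y$. -/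
open Filter Topology Bornology MeasureTheory
open scoped Matrix

section Spectrum

theorem norm_lt_one_of_mem_spectrum_inv {𝕜 A : Type*} [NormedField 𝕜] [Ring A] [Algebra 𝕜 A]
    (u : Aˣ) (hu : ∀ z ∈ spectrum 𝕜 (u : A), 1 < ‖z‖) {z : 𝕜} (hz : z ∈ spectrum 𝕜 (↑u⁻¹ : A)) :
    ‖z‖ < 1 := by
  rw [← spectrum.map_inv, Set.mem_inv] at hz
  have := hu _ hz
  rw [norm_inv, one_lt_inv_iff₀] at this
  exact this.2

variable {A : Type*} [NormedRing A] [NormedAlgebra ℂ A] [CompleteSpace A]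

theorem tendsto_pow_atTop_nhds_zero_of_spectralRadius_lt_one {a : A}
    (ha : spectralRadius ℂ a < 1) : Tendsto (fun k : ℕ => a ^ k) atTop (𝓝 0) := by
  obtain ⟨r, hr0, har, hr⟩ := ENNReal.lt_iff_exists_real_btwn.mp ha
  have hr1 : r < 1 := by simpa using hr
  have hbound : ∀ᶠ k : ℕ in atTop, ‖a ^ k‖ ≤ r ^ k := by
    have hroot := spectrum.pow_norm_pow_one_div_tendsto_nhds_spectralRadius a
    filter_upwards [hroot.eventually_lt_const har, eventually_gt_atTop 0] with k hk hk0
    rw [ENNReal.ofReal_lt_ofReal_iff', one_div, Real.rpow_inv_lt_iff_of_pos (norm_nonneg _) hr0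
      (by positivity), Real.rpow_natCast] at hk
    exact hk.1.le
  exact tendsto_zero_iff_norm_tendsto_zero.mpr <| squeeze_zero' (.of_forall fun _ => norm_nonneg _)
    hbound (tendsto_pow_atTop_nhds_zero_of_lt_one hr0 hr1)

theorem tendsto_pow_atTop_nhds_zero_of_forall_spectrum_norm_lt_one {a : A}
    (h : ∀ z ∈ spectrum ℂ a, ‖z‖ < 1) : Tendsto (fun k : ℕ => a ^ k) atTop (𝓝 0) := by
  rcases subsingleton_or_nontrivial A with hA | hA
  · simpa only [Subsingleton.elim _ (0 : A)] using tendsto_const_nhds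
  · refine tendsto_pow_atTop_nhds_zero_of_spectralRadius_lt_one ?_
    simpa using spectrum.spectralRadius_lt_of_forall_lt a (r := 1)
      fun z hz => by simpa [← NNReal.coe_lt_coe] using h z hz

end Spectrum

namespace Matrix

-- Any matrix norm would do: the lemmas below only state norm-independent facts.
attribute [local instance] Matrix.linftyOpNormedAddCommGroup Matrix.linftyOpNormedRing
  Matrix.linftyOpNormedAlgebra

variable {m n : Type*} [Fintype m] [Fintype n]

theorem isBounded_mulVec_image (P : Matrix m n ℝ) {s : Set (n → ℝ)} (hs : IsBounded s) :
    IsBounded (P.mulVec '' s) :=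
  (LinearMap.toContinuousLinearMap P.mulVecLin).lipschitz.isBounded_image hs

theorem eventually_mulVec_image_subset {ι : Type*} {l : Filter ι} {M : ι → Matrix m n ℝ}
    (hM : Tendsto M l (𝓝 0)) {S : Set (n → ℝ)} (hS : IsBounded S) {U : Set (m → ℝ)}
    (hU : U ∈ 𝓝 0) : ∀ᶠ i in l, (M i).mulVec '' S ⊆ U := by
  obtain ⟨R, hR, hSR⟩ := hS.subset_closedBall_lt 0 0
  obtain ⟨ε, hε, hεU⟩ := Metric.mem_nhds_iff.mp hU
  filter_upwards [(tendsto_zero_iff_norm_tendsto_zero.mp hM).eventually_lt_const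
    (div_pos hε hR)] with i hi
  rintro _ ⟨x, hx, rfl⟩
  refine hεU (mem_ball_zero_iff.mpr ?_)
  calc ‖M i *ᵥ x‖ ≤ ‖M i‖ * ‖x‖ := linfty_opNorm_mulVec _ _
    _ ≤ ‖M i‖ * R := by gcongr; exact mem_closedBall_zero_iff.mp (hSR hx)
    _ < ε / R * R := by gcongr
    _ = ε := div_mul_cancel₀ _ hR.ne'

variable [DecidableEq n]

theorem tendsto_inv_pow_atTop_nhds_zero {A : Matrix n n ℝ} (hA : IsUnit A.det)
    (hspec : ∀ z ∈ spectrum ℂ (A.map Complex.ofReal), 1 < ‖z‖) :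
    Tendsto (fun k : ℕ => A⁻¹ ^ k) atTop (𝓝 0) := by
  set u := ((isUnit_iff_isUnit_det A).mpr hA).unit
  set f : Matrix n n ℝ →+* Matrix n n ℂ := Complex.ofRealHom.mapMatrix
  have hcoe : ((Units.map (f : Matrix n n ℝ →* Matrix n n ℂ) u⁻¹ : _) : Matrix n n ℂ)
      = A⁻¹.map Complex.ofReal := by
    simp only [map_inv, Units.coe_map_inv, coe_units_inv, IsUnit.unit_spec, MonoidHom.coe_coe,
      RingHom.mapMatrix_apply, f, u]
    rfl
  have hC : Tendsto (fun k : ℕ => A⁻¹.map Complex.ofReal ^ k) atTop (𝓝 0) := by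
    refine tendsto_pow_atTop_nhds_zero_of_forall_spectrum_norm_lt_one fun z hz => ?_
    rw [← hcoe, map_inv] at hz
    exact norm_lt_one_of_mem_spectrum_inv _ hspec hz
  convert ((continuous_id.matrix_map Complex.continuous_re).tendsto 0).comp hC using 1
  · ext k : 1
    change A⁻¹ ^ k = (A⁻¹.map Complex.ofRealHom ^ k).map Complex.re
    rw [← Matrix.map_pow, Matrix.map_map]
    ext i j
    simp
  · simp

theorem isOpen_mulVec_image {P : Matrix n n ℝ} (hP : IsUnit P.det) {s : Set (n → ℝ)}
    (hs : IsOpen s) : IsOpen (P.mulVec '' s) := by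
  rw [Set.image_eq_preimage_of_inverse (g := P⁻¹.mulVec)
    (fun x => by simp [mulVec_mulVec, nonsing_inv_mul _ hP])
    (fun x => by simp [mulVec_mulVec, mul_nonsing_inv _ hP])]
  exact hs.preimage (by fun_prop)

theorem one_le_abs_det_of_subset_mulVec_image {A : Matrix n n ℝ} {s : Set (n → ℝ)}
    (h0 : volume s ≠ 0) (hfin : volume s ≠ ⊤) (h : s ⊆ A.mulVec '' s) : 1 ≤ |A.det| := by
  have himage : volume (A.mulVec '' s) = ENNReal.ofReal |A.det| * volume s := by
    have := Measure.addHaar_image_linearMap volume (toLin' A) s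
    rwa [LinearMap.det_toLin', toLin'_apply', coe_mulVecLin] at this
  have : 1 * volume s ≤ ENNReal.ofReal |A.det| * volume s := by
    rw [one_mul, ← himage]
    exact measure_mono h
  exact ENNReal.one_le_ofReal.mp ((ENNReal.mul_le_mul_iff_left h0 hfin).mp this)

end Matrix

theorem isOpen_eucBall (d : ℕ) : IsOpen (eucBall d) :=
  isOpen_lt (by fun_prop) continuous_const

theorem zero_mem_eucBall (d : ℕ) : 0 ∈ eucBall d := by
  simp [eucBall]

theorem isBounded_eucBall (d : ℕ) : IsBounded (eucBall d) := by
  refine (Metric.isBounded_closedBall (x := 0) (r := 1)).subset fun x hx => ?_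
  rw [mem_closedBall_zero_iff, pi_norm_le_iff_of_nonneg zero_le_one]
  intro i
  rw [Real.norm_eq_abs, ← sq_le_one_iff_abs_le_one]
  exact (Finset.single_le_sum (fun j _ => sq_nonneg (x j)) (Finset.mem_univ i)).trans hx.le

section Levels

variable {E : Type*} {S : ℤ → Set E}

theorem exists_mem_diff_of_monotone (hS : Monotone S) {x : E} {l m : ℤ} (hl : x ∉ S l)
    (hm : x ∈ S m) : ∃ k, x ∈ S (k + 1) \ S k := by
  obtain ⟨k, hk, hmin⟩ := Int.exists_least_of_bdd (P := fun k => x ∈ S k)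
    ⟨l, fun k hk => not_lt.mp fun hkl => hl (hS hkl.le hk)⟩ ⟨m, hm⟩
  exact ⟨k - 1, by rwa [sub_add_cancel], fun h => by linarith [hmin _ h]⟩

theorem lt_of_mem_diff_of_mem (hS : Monotone S) {x : E} {k N : ℤ} (hx : x ∈ S (k + 1) \ S k)
    (hN : x ∈ S N) : k < N :=
  not_le.mp fun hNk => hx.2 (hS hNk hN)

structure IsLevelFunction [Zero E] (S : ℤ → Set E) (b : ℝ) (ρ : E → ℝ) : Prop where
  map_zero : ρ 0 = 0
  eq_zpow : ∀ k x, x ∈ S (k + 1) \ S k → ρ x = b ^ k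
  exists_mem_diff : ∀ x, x ≠ 0 → ∃ k, x ∈ S (k + 1) \ S k

namespace IsLevelFunction

variable {b : ℝ} {ρ : E → ℝ}

section Zero

variable [Zero E]

theorem eq_zero_iff (hρ : IsLevelFunction S b ρ) (hb : 0 < b) {x : E} : ρ x = 0 ↔ x = 0 := by
  refine ⟨fun h => by_contra fun hx => ?_, fun h => h ▸ hρ.map_zero⟩
  obtain ⟨k, hk⟩ := hρ.exists_mem_diff x hx
  exact (zpow_pos hb k).ne' (hρ.eq_zpow k x hk ▸ h)

theorem nonneg (hρ : IsLevelFunction S b ρ) (hb : 0 < b) (x : E) : 0 ≤ ρ x := by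
  rcases eq_or_ne x 0 with rfl | hx
  · exact hρ.map_zero.ge
  obtain ⟨k, hk⟩ := hρ.exists_mem_diff x hx
  exact hρ.eq_zpow k x hk ▸ (zpow_pos hb k).le

theorem le_zpow_of_mem (hρ : IsLevelFunction S b ρ) (hS : Monotone S) (hb : 1 ≤ b) {x : E}
    {N : ℤ} (hx : x ∈ S N) : ρ x ≤ b ^ (N - 1) := by
  rcases eq_or_ne x 0 with rfl | hx0
  · exact hρ.map_zero.trans_le (zpow_pos (zero_lt_one.trans_le hb) _).le
  obtain ⟨k, hk⟩ := hρ.exists_mem_diff x hx0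
  rw [hρ.eq_zpow k x hk]
  exact zpow_le_zpow_right₀ hb (by linarith [lt_of_mem_diff_of_mem hS hk hx])

theorem map_eq_mul (hρ : IsLevelFunction S b ρ) (hb : b ≠ 0) {T : E → E} (hT0 : T 0 = 0)
    (hT : ∀ k x, T x ∈ S (k + 1) ↔ x ∈ S k) (x : E) : ρ (T x) = b * ρ x := by
  rcases eq_or_ne x 0 with rfl | hx
  · rw [hT0, hρ.map_zero, mul_zero]
  obtain ⟨k, hk⟩ := hρ.exists_mem_diff x hx
  have hTx : T x ∈ S (k + 1 + 1) \ S (k + 1) := ⟨(hT _ _).2 hk.1, fun h => hk.2 ((hT _ _).1 h)⟩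
  rw [hρ.eq_zpow _ _ hTx, hρ.eq_zpow _ _ hk, zpow_add_one₀ hb, mul_comm]

end Zero

theorem add_le [AddZeroClass E] (hρ : IsLevelFunction S b ρ) (hS : Monotone S) (hb : 1 ≤ b)
    {m : ℕ} (hadd : ∀ j x y, x ∈ S j → y ∈ S j → x + y ∈ S (j + m)) (x y : E) :
    ρ (x + y) ≤ b ^ m * max (ρ x) (ρ y) := by
  have hb0 : 0 < b := zero_lt_one.trans_le hb
  have hbm : 1 ≤ b ^ m := one_le_pow₀ hb
  rcases eq_or_ne x 0 with rfl | hx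
  · rw [zero_add, hρ.map_zero, max_eq_right (hρ.nonneg hb0 y)]
    exact le_mul_of_one_le_left (hρ.nonneg hb0 y) hbm
  rcases eq_or_ne y 0 with rfl | hy
  · rw [add_zero, hρ.map_zero, max_eq_left (hρ.nonneg hb0 x)]
    exact le_mul_of_one_le_left (hρ.nonneg hb0 x) hbm
  obtain ⟨k, hk⟩ := hρ.exists_mem_diff x hx
  obtain ⟨l, hl⟩ := hρ.exists_mem_diff y hy
  have hxy : x + y ∈ S (max k l + 1 + m) :=
    hadd _ _ _ (hS (by omega) hk.1) (hS (by omega) hl.1)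
  calc ρ (x + y) ≤ b ^ (max k l + 1 + m - 1) := hρ.le_zpow_of_mem hS hb hxy
    _ = b ^ m * max (b ^ k) (b ^ l) := by
      rw [show max k l + 1 + m - 1 = m + max k l by ring, zpow_add₀ hb0.ne', zpow_natCast,
        (zpow_right_mono₀ hb).map_max]
    _ = b ^ m * max (ρ x) (ρ y) := by rw [hρ.eq_zpow _ _ hk, hρ.eq_zpow _ _ hl]

end IsLevelFunction

end Levels

section Dilates

variable {n : Type*} [Fintype n] [DecidableEq n]

def dilatedSet (A : Matrix n n ℝ) (Δ : Set (n → ℝ)) (k : ℤ) : Set (n → ℝ) := (A ^ k).mulVec '' Δ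

variable {A : Matrix n n ℝ} {Δ : Set (n → ℝ)}

theorem mem_dilatedSet_iff (hA : IsUnit A.det) {x : n → ℝ} {k : ℤ} :
    x ∈ dilatedSet A Δ k ↔ A ^ (-k) *ᵥ x ∈ Δ := by
  constructor
  · rintro ⟨y, hy, rfl⟩
    rwa [Matrix.mulVec_mulVec, ← Matrix.zpow_add hA, neg_add_cancel, zpow_zero, Matrix.one_mulVec]
  · intro hx
    refine ⟨_, hx, ?_⟩
    rw [Matrix.mulVec_mulVec, ← Matrix.zpow_add hA, add_neg_cancel, zpow_zero, Matrix.one_mulVec]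

theorem dilatedSet_add (hA : IsUnit A.det) (j k : ℤ) :
    dilatedSet A Δ (j + k) = (A ^ j).mulVec '' dilatedSet A Δ k := by
  simp only [dilatedSet, Set.image_image, Matrix.mulVec_mulVec, Matrix.zpow_add hA]

theorem monotone_dilatedSet (hA : IsUnit A.det) (hnest : Δ ⊆ A.mulVec '' Δ) :
    Monotone (dilatedSet A Δ) := by
  refine monotone_int_of_le_succ fun k => ?_
  rw [dilatedSet_add hA]
  exact Set.image_mono (by rwa [dilatedSet, zpow_one])

theorem mulVec_mem_dilatedSet_add_one_iff (hA : IsUnit A.det) {x : n → ℝ} {k : ℤ} :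
    A *ᵥ x ∈ dilatedSet A Δ (k + 1) ↔ x ∈ dilatedSet A Δ k := by
  have hinj : Function.Injective A.mulVec :=
    Matrix.mulVec_injective_iff_isUnit.mpr ((Matrix.isUnit_iff_isUnit_det A).mpr hA)
  rw [add_comm, dilatedSet_add hA, zpow_one, hinj.mem_set_image]

theorem add_mem_dilatedSet (hA : IsUnit A.det) {m : ℤ}
    (hm : ∀ x ∈ Δ, ∀ y ∈ Δ, x + y ∈ dilatedSet A Δ m) {j : ℤ} {x y : n → ℝ}
    (hx : x ∈ dilatedSet A Δ j) (hy : y ∈ dilatedSet A Δ j) : x + y ∈ dilatedSet A Δ (j + m) := by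
  obtain ⟨u, hu, rfl⟩ := hx
  obtain ⟨v, hv, rfl⟩ := hy
  rw [dilatedSet_add hA, ← Matrix.mulVec_add]
  exact Set.mem_image_of_mem _ (hm u hu v hv)

theorem exists_subset_dilatedSet (hA : IsUnit A.det)
    (hpow : Tendsto (fun k : ℕ => A⁻¹ ^ k) atTop (𝓝 0)) (hΔ : Δ ∈ 𝓝 0) {S : Set (n → ℝ)}
    (hS : IsBounded S) : ∃ k : ℕ, S ⊆ dilatedSet A Δ k := by
  obtain ⟨k, hk⟩ := (Matrix.eventually_mulVec_image_subset hpow hS hΔ).exists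
  refine ⟨k, fun x hx => (mem_dilatedSet_iff hA).mpr ?_⟩
  rw [Matrix.zpow_neg_natCast, ← Matrix.inv_pow']
  exact hk (Set.mem_image_of_mem _ hx)

theorem exists_notMem_dilatedSet (hpow : Tendsto (fun k : ℕ => A⁻¹ ^ k) atTop (𝓝 0))
    (hΔ : IsBounded Δ) {x : n → ℝ} (hx : x ≠ 0) : ∃ k : ℤ, x ∉ dilatedSet A Δ k := by
  obtain ⟨k, hk⟩ :=
    (Matrix.eventually_mulVec_image_subset hpow hΔ (compl_singleton_mem_nhds hx.symm)).exists
  refine ⟨-k, fun hmem => hk ?_ rfl⟩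
  rwa [dilatedSet, Matrix.zpow_neg_natCast, ← Matrix.inv_pow'] at hmem

end Dilates

/-- The step function `ρ_A` (equal to `b^k` on `Δ_{k+1} \ Δ_k` and `0` at `0`) built from
the nested ellipsoids `Δ_k = A^k(Δ)` of a dilation matrix `A` is a homogeneous quasi-norm
associated with `A`: it vanishes exactly at `0`, satisfies `ρ_A(Ax) = b ρ_A(x)`, and a
quasi-triangle inequality `ρ_A(x+y) ≤ c (ρ_A(x) + ρ_A(y))`. -/
theorem stmt_7 (d : ℕ) (A : Matrix (Fin d) (Fin d) ℝ) (hA : IsUnit A.det)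
    (hspec : ∀ z ∈ spectrum ℂ (A.map (Complex.ofReal)), 1 < ‖z‖)
    (b : ℝ) (hb : b = |A.det|)
    (P : Matrix (Fin d) (Fin d) ℝ) (hP : IsUnit P.det)
    (Δ : Set (Fin d → ℝ)) (hΔ : Δ = P.mulVec '' eucBall d)
    (hnest : Δ ⊆ A.mulVec '' Δ)
    (Δk : ℤ → Set (Fin d → ℝ)) (hΔk : ∀ k : ℤ, Δk k = (A ^ k).mulVec '' Δ)
    (ρ : (Fin d → ℝ) → ℝ) (hρ0 : ρ 0 = 0)
    (hρ : ∀ (k : ℤ) (x : Fin d → ℝ), x ∈ Δk (k + 1) \ Δk k → ρ x = b ^ k) :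
    (∀ x, ρ x = 0 ↔ x = 0) ∧
    (∀ x, ρ (A.mulVec x) = b * ρ x) ∧
    (∃ c : ℝ, 0 < c ∧ ∀ x y, ρ (x + y) ≤ c * (ρ x + ρ y)) := by
  obtain rfl : Δk = dilatedSet A Δ := funext hΔk
  have hΔ0 : Δ ∈ 𝓝 0 := hΔ ▸ (Matrix.isOpen_mulVec_image hP (isOpen_eucBall d)).mem_nhds
    ⟨0, zero_mem_eucBall d, Matrix.mulVec_zero P⟩
  have hΔb : IsBounded Δ := hΔ ▸ P.isBounded_mulVec_image (isBounded_eucBall d)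
  have hb1 : 1 ≤ b := hb ▸ Matrix.one_le_abs_det_of_subset_mulVec_image
    (Measure.measure_pos_of_mem_nhds volume hΔ0).ne' hΔb.measure_lt_top.ne hnest
  have hb0 : 0 < b := zero_lt_one.trans_le hb1
  have hpow := Matrix.tendsto_inv_pow_atTop_nhds_zero hA hspec
  have hmono := monotone_dilatedSet hA hnest
  have hlevel : IsLevelFunction (dilatedSet A Δ) b ρ := ⟨hρ0, hρ, fun x hx =>
    have ⟨_, hl⟩ := exists_notMem_dilatedSet hpow hΔb hx
    have ⟨_, hm⟩ := exists_subset_dilatedSet hA hpow hΔ0 isBounded_singleton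
    exists_mem_diff_of_monotone hmono hl (hm rfl)⟩
  obtain ⟨m, hm⟩ := exists_subset_dilatedSet hA hpow hΔ0 (hΔb.add hΔb)
  refine ⟨fun x => hlevel.eq_zero_iff hb0,
    hlevel.map_eq_mul hb0.ne' (Matrix.mulVec_zero A)
      fun _ _ => mulVec_mem_dilatedSet_add_one_iff hA,
    b ^ m, pow_pos hb0 m, fun x y => ?_⟩
  calc ρ (x + y) ≤ b ^ m * max (ρ x) (ρ y) :=
        hlevel.add_le hmono hb1
          (fun _ _ _ => add_mem_dilatedSet hA fun x hx y hy => hm (Set.add_mem_add hx hy)) x y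
    _ ≤ b ^ m * (ρ x + ρ y) := by
      gcongr
      exact max_le_add_of_nonneg (hlevel.nonneg hb0 x) (hlevel.nonneg hb0 y)
end
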